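/- Let n ≥ 1 and let x, y : {1,…,n} → {0,1}. In the graph W(x,y): if there exists an index i with x_i = y_i = 1, then dist(t_6, b_{i,3}) = 10, and hence the diameter of W(x,y) is at least 10; if there is no such index, then every two vertices of W(x,y) are at distance at most 9. -/

import Mathlib

/-- Vertices of the `Windmill` construction: the tail `t 0, …, t 5` (representing
`t_1, …, t_6`; the center is `c = t 0`), and for each `i ∈ {1, …, n}` (encoded as
`Fin n`) the vertices `a_{i,2}, a_{i,3}, b_{i,1}, b_{i,2}, b_{i,3}`. -/
inductive WVert (n : ℕ) : Type
  | t : Fin 6 → WVert n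
  | a2 : Fin n → WVert n
  | a3 : Fin n → WVert n
  | b1 : Fin n → WVert n
  | b2 : Fin n → WVert n
  | b3 : Fin n → WVert n

/-- Edges of `W(x, y)`: the tail path `t j ~ t (j+1)`; `a_{i,3} ~ b_{i,1}`;
`c ~ a_{i,2}` always, `a_{i,2} ~ a_{i,3}` iff `x i = 1`, `c ~ a_{i,3}` iff `x i = 0`;
`b_{i,1} ~ b_{i,2}` always, `b_{i,2} ~ b_{i,3}` iff `y i = 1`,
`b_{i,1} ~ b_{i,3}` iff `y i = 0`; no other edges. -/
def wRel {n : ℕ} (x y : Fin n → Fin 2) : WVert n → WVert n → Prop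
  | .t j, .t k => (k : ℕ) = (j : ℕ) + 1
  | .a3 i, .b1 j => i = j
  | .t j, .a2 _ => j = 0
  | .a2 i, .a3 j => i = j ∧ x i = 1
  | .t j, .a3 i => j = 0 ∧ x i = 0
  | .b1 i, .b2 j => i = j
  | .b2 i, .b3 j => i = j ∧ y i = 1
  | .b1 i, .b3 j => i = j ∧ y i = 0
  | _, _ => False

/-- The `Windmill` graph. -/
def WGraph {n : ℕ} (x y : Fin n → Fin 2) : SimpleGraph (WVert n) :=
  SimpleGraph.fromRel (wRel x y)

section aux
variable {n : ℕ} (x y : Fin n → Fin 2)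

lemma adj_of_rel {u v : WVert n} (hne : u ≠ v) (h : wRel x y u v) : (WGraph x y).Adj u v :=
  ⟨hne, Or.inl h⟩

lemma adj_tt {j k : Fin 6} (h : (k : ℕ) = (j : ℕ) + 1) : (WGraph x y).Adj (.t j) (.t k) :=
  adj_of_rel x y (by intro he; injection he with h'; rw [h'] at h; omega) h

lemma adj_ca2 (i : Fin n) : (WGraph x y).Adj (.t 0) (.a2 i) :=
  adj_of_rel x y (by intro h; cases h) rfl

lemma adj_a2a3 {i : Fin n} (h : x i = 1) : (WGraph x y).Adj (.a2 i) (.a3 i) :=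
  adj_of_rel x y (by intro h; cases h) ⟨rfl, h⟩

lemma adj_ca3 {i : Fin n} (h : x i = 0) : (WGraph x y).Adj (.t 0) (.a3 i) :=
  adj_of_rel x y (by intro h; cases h) ⟨rfl, h⟩

lemma adj_a3b1 (i : Fin n) : (WGraph x y).Adj (.a3 i) (.b1 i) :=
  adj_of_rel x y (by intro h; cases h) rfl

lemma adj_b1b2 (i : Fin n) : (WGraph x y).Adj (.b1 i) (.b2 i) :=
  adj_of_rel x y (by intro h; cases h) rfl

lemma adj_b2b3 {i : Fin n} (h : y i = 1) : (WGraph x y).Adj (.b2 i) (.b3 i) :=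
  adj_of_rel x y (by intro h; cases h) ⟨rfl, h⟩

lemma adj_b1b3 {i : Fin n} (h : y i = 0) : (WGraph x y).Adj (.b1 i) (.b3 i) :=
  adj_of_rel x y (by intro h; cases h) ⟨rfl, h⟩

lemma walk_t (k : Fin 6) : ∃ p : (WGraph x y).Walk (.t 0) (.t k), p.length = (k : ℕ) := by
  have e : ∀ j k : Fin 6, ((k : ℕ) = (j : ℕ) + 1) → (WGraph x y).Adj (.t j) (.t k) :=
    fun j k h => adj_tt x y h
  fin_cases k
  · exact ⟨.nil, rfl⟩
  · exact ⟨(e 0 1 rfl).toWalk, rfl⟩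
  · exact ⟨.cons (e 0 1 rfl) (e 1 2 rfl).toWalk, rfl⟩
  · exact ⟨.cons (e 0 1 rfl) (.cons (e 1 2 rfl) (e 2 3 rfl).toWalk), rfl⟩
  · exact ⟨.cons (e 0 1 rfl) (.cons (e 1 2 rfl) (.cons (e 2 3 rfl) (e 3 4 rfl).toWalk)), rfl⟩
  · exact ⟨.cons (e 0 1 rfl) (.cons (e 1 2 rfl) (.cons (e 2 3 rfl) (.cons (e 3 4 rfl)
      (e 4 5 rfl).toWalk))), rfl⟩

lemma walk_a3 (i : Fin n) :
    ∃ p : (WGraph x y).Walk (.t 0) (.a3 i), p.length ≤ 2 ∧ (x i = 0 → p.length ≤ 1) := by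
  have h2 : ∀ z : Fin 2, z = 0 ∨ z = 1 := by decide
  rcases h2 (x i) with h | h
  · exact ⟨(adj_ca3 x y h).toWalk, by simp, fun _ => by simp⟩
  · refine ⟨.cons (adj_ca2 x y i) (adj_a2a3 x y h).toWalk, by simp, fun h0 => ?_⟩
    rw [h] at h0; exact absurd h0 (by decide)

lemma walk_b1 (i : Fin n) :
    ∃ p : (WGraph x y).Walk (.t 0) (.b1 i), p.length ≤ 3 ∧ (x i = 0 → p.length ≤ 2) := by
  obtain ⟨p, hp, hp0⟩ := walk_a3 x y i
  refine ⟨p.concat (adj_a3b1 x y i), ?_, fun h0 => ?_⟩ <;>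
    simp [SimpleGraph.Walk.length_concat] <;> [omega; (have := hp0 h0; omega)]

lemma walks (hno : ¬ ∃ i, x i = 1 ∧ y i = 1) (v : WVert n) :
    ∃ p : (WGraph x y).Walk (.t 0) v, p.length ≤ 5 ∧ (v = .t 5 ∨ p.length ≤ 4) := by
  have h2 : ∀ z : Fin 2, z = 0 ∨ z = 1 := by decide
  cases v with
  | t k =>
    obtain ⟨p, hp⟩ := walk_t x y k
    by_cases hk : k = (5 : Fin 6)
    · subst hk; exact ⟨p, by omega, Or.inl rfl⟩
    · have hv : (k : ℕ) ≤ 4 := by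
        have := k.isLt
        have : (k : ℕ) ≠ 5 := fun h => hk (Fin.ext h)
        omega
      exact ⟨p, by omega, Or.inr (by omega)⟩
  | a2 i => exact ⟨(adj_ca2 x y i).toWalk, by simp, Or.inr (by simp)⟩
  | a3 i =>
    obtain ⟨p, hp, _⟩ := walk_a3 x y i
    exact ⟨p, by omega, Or.inr (by omega)⟩
  | b1 i =>
    obtain ⟨p, hp, _⟩ := walk_b1 x y i
    exact ⟨p, by omega, Or.inr (by omega)⟩
  | b2 i =>
    obtain ⟨p, hp, _⟩ := walk_b1 x y i
    refine ⟨p.concat (adj_b1b2 x y i), ?_, Or.inr ?_⟩ <;>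
      simp [SimpleGraph.Walk.length_concat] <;> omega
  | b3 i =>
    rcases h2 (y i) with hy | hy
    · obtain ⟨p, hp, _⟩ := walk_b1 x y i
      refine ⟨p.concat (adj_b1b3 x y hy), ?_, Or.inr ?_⟩ <;>
        simp [SimpleGraph.Walk.length_concat] <;> omega
    · have hx : x i = 0 := by
        rcases h2 (x i) with hx | hx
        · exact hx
        · exact absurd ⟨i, hx, hy⟩ hno
      obtain ⟨p, hp, hp0⟩ := walk_b1 x y i
      have hp2 := hp0 hx
      refine ⟨(p.concat (adj_b1b2 x y i)).concat (adj_b2b3 x y hy), ?_, Or.inr ?_⟩ <;>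
        simp [SimpleGraph.Walk.length_concat] <;> omega

end aux

section phi
variable {n : ℕ} (x y : Fin n → Fin 2)

def phi (i : Fin n) : WVert n → ℤ
  | .t j => 5 - (j : ℤ)
  | .a2 j => if j = i then 6 else 5
  | .a3 j => if j = i then 7 else 5
  | .b1 j => if j = i then 8 else 5
  | .b2 j => if j = i then 9 else 5
  | .b3 j => if j = i then 10 else 5

lemma phi_rel {i : Fin n} (hx : x i = 1) (hy : y i = 1) {u v : WVert n}
    (h : wRel x y u v) : |phi i u - phi i v| ≤ 1 := by
  cases u <;> cases v <;> simp only [wRel] at h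
  case t.t j k =>
    simp only [phi]
    rw [abs_le]; constructor <;> omega
  case t.a2 j j' =>
    subst h
    rcases eq_or_ne j' i with rfl | hne
    · simp [phi]
    · simp [phi, hne]
  case t.a3 j j' =>
    obtain ⟨rfl, hx'⟩ := h
    rcases eq_or_ne j' i with rfl | hne
    · rw [hx] at hx'; exact absurd hx' (by decide)
    · simp [phi, hne]
  case a2.a3 j j' =>
    obtain ⟨rfl, _⟩ := h
    rcases eq_or_ne j i with rfl | hne
    · simp [phi]
    · simp [phi, hne]
  case a3.b1 j j' =>
    subst h
    rcases eq_or_ne j i with rfl | hne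
    · simp [phi]
    · simp [phi, hne]
  case b1.b2 j j' =>
    subst h
    rcases eq_or_ne j i with rfl | hne
    · simp [phi]
    · simp [phi, hne]
  case b2.b3 j j' =>
    obtain ⟨rfl, _⟩ := h
    rcases eq_or_ne j i with rfl | hne
    · simp [phi]
    · simp [phi, hne]
  case b1.b3 j j' =>
    obtain ⟨rfl, hy'⟩ := h
    rcases eq_or_ne j i with rfl | hne
    · rw [hy] at hy'; exact absurd hy' (by decide)
    · simp [phi, hne]

lemma phi_adj {i : Fin n} (hx : x i = 1) (hy : y i = 1) {u v : WVert n}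
    (h : (WGraph x y).Adj u v) : |phi i u - phi i v| ≤ 1 := by
  rcases h.2 with h' | h'
  · exact phi_rel x y hx hy h'
  · rw [abs_sub_comm]; exact phi_rel x y hx hy h'

lemma abs_le_walk_length {V : Type*} {G : SimpleGraph V} (φ : V → ℤ)
    (hφ : ∀ ⦃u v⦄, G.Adj u v → |φ u - φ v| ≤ 1) {u v : V} (p : G.Walk u v) :
    |φ u - φ v| ≤ (p.length : ℤ) := by
  induction p with
  | nil => simp
  | @cons a b c h p ih =>
    have h1 := hφ h
    have h2 : |φ a - φ c| ≤ |φ a - φ b| + |φ b - φ c| := abs_sub_le _ _ _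
    rw [SimpleGraph.Walk.length_cons]
    push_cast
    linarith

end phi

theorem stmt_7 {n : ℕ} (hn : 1 ≤ n) (x y : Fin n → Fin 2) :
    (∀ i : Fin n, x i = 1 → y i = 1 →
      (WGraph x y).dist (WVert.t 5) (WVert.b3 i) = 10) ∧
    ((¬ ∃ i, x i = 1 ∧ y i = 1) →
      ∀ u w : WVert n, (WGraph x y).dist u w ≤ 9) := by
  constructor
  · intro i hx hy
    obtain ⟨p5, hp5⟩ := walk_t x y 5
    have hp5' : p5.length = 5 := by rw [hp5]; decide
    set q : (WGraph x y).Walk (.t 0) (.b3 i) :=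
      .cons (adj_ca2 x y i) (.cons (adj_a2a3 x y hx) (.cons (adj_a3b1 x y i)
        (.cons (adj_b1b2 x y i) (adj_b2b3 x y hy).toWalk))) with hqdef
    have hq : q.length = 5 := by
      simp [hqdef]
    have hp10 : (p5.reverse.append q).length = 10 := by
      rw [SimpleGraph.Walk.length_append, SimpleGraph.Walk.length_reverse, hp5', hq]
    have hub : (WGraph x y).dist (.t 5) (.b3 i) ≤ 10 := by
      have := SimpleGraph.dist_le (p5.reverse.append q)
      omega
    have hreach : (WGraph x y).Reachable (.t 5) (.b3 i) := ⟨p5.reverse.append q⟩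
    obtain ⟨r, hr⟩ := hreach.exists_walk_length_eq_dist
    have hlow := abs_le_walk_length (phi i) (fun u v h => phi_adj x y hx hy h) r
    have hc : ((5 : Fin 6) : ℤ) = 5 := by decide
    have hval : |phi i (WVert.t 5) - phi i (WVert.b3 i)| = 10 := by
      simp [phi, hc]
    rw [hval, hr] at hlow
    have : (10 : ℕ) ≤ (WGraph x y).dist (.t 5) (.b3 i) := by exact_mod_cast hlow
    omega
  · intro hno u w
    obtain ⟨pu, hpu, hu4⟩ := walks x y hno u
    obtain ⟨pw, hpw, hw4⟩ := walks x y hno w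
    have hd : (WGraph x y).dist u w ≤ pu.length + pw.length := by
      have := SimpleGraph.dist_le (pu.reverse.append pw)
      simpa [SimpleGraph.Walk.length_append, SimpleGraph.Walk.length_reverse] using this
    rcases hu4 with hu | hu
    · rcases hw4 with hw | hw
      · subst hu; subst hw; simp [SimpleGraph.dist_self]
      · omega
    · omega
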